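/- arXiv:1610.09147 — 2 statements merged into one kernel-verified Lean document; each statement's English description precedes it below -/
import Mathlib

section
/- A smooth geodesic on the completed cone C̄_α that intersects every neighborhood of the vertex v must be radial. Equivalently: if a geodesic γ: (0,1) → C_α, parametrized by arc length, satisfies −1 < g_α(γ'(t), ∂_r) < 1 at some point, then there exists d₀ > 0 such that the image γ((0,1)) is disjoint from the metric ball B_{d₀}(v) in C̄_α. -/
/- ------------------------------------------------------------------------ -/
/- Common framework: Riemannian metrics in a global coordinate chart on ℝ². -/
/- Surfaces are modeled in (global) coordinates: points are elements of     -/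
/- `Pt := Fin 2 → ℝ` and a Riemannian metric is a (smooth, symmetric,       -/
/- positive definite) matrix field `g : Pt → Fin 2 → Fin 2 → ℝ`.            -/
/- ------------------------------------------------------------------------ -/

noncomputable section

open Real Set Filter MeasureTheory Topology

/-- Points of the plane (global coordinates of the surface). -/
abbrev Pt := Fin 2 → ℝ

/-- The Euclidean inner product on `Pt`. -/
def eip (v w : Pt) : ℝ := ∑ i, v i * w i

namespace RG

variable (g : Pt → Fin 2 → Fin 2 → ℝ)

/-- Inner product of the tangent vectors `v, w` at the point `x`, w.r.t. the metric `g`. -/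
def ip (x v w : Pt) : ℝ := ∑ i, ∑ j, g x i j * v i * w j

/-- Norm of a tangent vector w.r.t. the metric `g`. -/
def nrm (x v : Pt) : ℝ := Real.sqrt (ip g x v v)

/-- `g` is a smooth Riemannian metric on the set `U`. -/
def IsMetricOn (U : Set Pt) : Prop :=
  (∀ x i j, g x i j = g x j i) ∧
  (∀ x ∈ U, ∀ v : Pt, v ≠ 0 → 0 < ip g x v v) ∧
  ContDiffOn ℝ (⊤ : ℕ∞) g U

/-- Length of the curve `γ` on `[a, b]` w.r.t. the metric `g`. -/
def length (γ : ℝ → Pt) (a b : ℝ) : ℝ := ∫ t in a..b, nrm g (γ t) (deriv γ t)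

/-- Energy of the curve `γ` on `[a, b]` w.r.t. the metric `g`. -/
def energy (γ : ℝ → Pt) (a b : ℝ) : ℝ := ∫ t in a..b, ip g (γ t) (deriv γ t) (deriv γ t)

/-- The inverse metric `g^{kl}`. -/
def ginv (x : Pt) : Fin 2 → Fin 2 → ℝ := fun k l =>
  ((Matrix.of (g x))⁻¹ : Matrix (Fin 2) (Fin 2) ℝ) k l

/-- Partial derivative of the metric in the `l`-th coordinate direction. -/
def dg (l : Fin 2) (x : Pt) : Fin 2 → Fin 2 → ℝ := fderiv ℝ g x (Pi.single l 1)

/-- Christoffel symbols `Γ^k_{ij}` of the metric `g`. -/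
def christoffel (x : Pt) (k i j : Fin 2) : ℝ :=
  (1 / 2) * ∑ l, ginv g x k l * (dg g i x j l + dg g j x i l - dg g l x i j)

/-- Covariant acceleration `(D_t γ')^k` of the curve `γ`. -/
def acc (γ : ℝ → Pt) (t : ℝ) : Pt := fun k =>
  deriv (deriv γ) t k +
    ∑ i, ∑ j, christoffel g (γ t) k i j * deriv γ t i * deriv γ t j

/-- `γ` is an (affinely parametrized) geodesic of `g` on the parameter set `I`,
with values in `U`. -/
def IsGeodesicOn (U : Set Pt) (γ : ℝ → Pt) (I : Set ℝ) : Prop :=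
  (∀ t ∈ I, γ t ∈ U) ∧ ContDiffOn ℝ 2 γ I ∧ ∀ t ∈ I, acc g γ t = 0

/-- `γ` is parametrized by arc length on `I`. -/
def UnitSpeedOn (γ : ℝ → Pt) (I : Set ℝ) : Prop :=
  ∀ t ∈ I, ip g (γ t) (deriv γ t) (deriv γ t) = 1

/-- An admissible `C¹` path from `x` to `y` staying in `U`. -/
def IsPath (U : Set Pt) (γ : ℝ → Pt) (x y : Pt) : Prop :=
  γ 0 = x ∧ γ 1 = y ∧ (∀ t ∈ Icc (0:ℝ) 1, γ t ∈ U) ∧ ContDiffOn ℝ 1 γ (Icc 0 1)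

/-- The Riemannian path distance in `U` w.r.t. the metric `g`. -/
def pdist (U : Set Pt) (x y : Pt) : ℝ :=
  sInf {L : ℝ | ∃ γ : ℝ → Pt, IsPath U γ x y ∧ L = length g γ 0 1}

/-- Completeness of a distance function on the plane. -/
def CompleteWith (d : Pt → Pt → ℝ) : Prop :=
  ∀ u : ℕ → Pt, (∀ ε > 0, ∃ N, ∀ m ≥ N, ∀ n ≥ N, d (u m) (u n) < ε) →
    ∃ x : Pt, ∀ ε > 0, ∃ N, ∀ n ≥ N, d (u n) x < ε

/-- Derivative of the Christoffel symbols in the `l`-th coordinate direction. -/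
def dchristoffel (l : Fin 2) (x : Pt) (k i j : Fin 2) : ℝ :=
  fderiv ℝ (fun y => christoffel g y k i j) x (Pi.single l 1)

/-- The curvature tensor `R^l_{ijk}` of the metric `g`. -/
def riem (x : Pt) (l i j k : Fin 2) : ℝ :=
  dchristoffel g i x l j k - dchristoffel g j x l i k +
    ∑ m, (christoffel g x l i m * christoffel g x m j k -
      christoffel g x l j m * christoffel g x m i k)

/-- The Gauss curvature of the metric `g` (equal to the scalar curvature up to the
usual factor 2). -/
def gauss (x : Pt) : ℝ :=
  (∑ l, g x l 0 * riem g x l 0 1 1) /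
    (g x 0 0 * g x 1 1 - g x 0 1 * g x 1 0)

end RG

/- ------------------------------------------------------------------------ -/
/- Cones and asymptotically conical metrics.                                -/
/- ------------------------------------------------------------------------ -/

/-- The point with polar coordinates `(r, φ)`. -/
def pol (r φ : ℝ) : Pt := ![r * Real.cos φ, r * Real.sin φ]

/-- The coordinate frame `(∂_r, ∂_φ)` of polar coordinates at `(r, φ)`. -/
def polFrame (r φ : ℝ) : Fin 2 → Pt :=
  ![![Real.cos φ, Real.sin φ], ![-r * Real.sin φ, r * Real.cos φ]]

/-- The components of the metric `g` in polar coordinates. -/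
def polarComp (g : Pt → Fin 2 → Fin 2 → ℝ) (i j : Fin 2) (r φ : ℝ) : ℝ :=
  RG.ip g (pol r φ) (polFrame r φ i) (polFrame r φ j)

/-- `e = O₂(r^{-μ})` as `r → ∞`: every mixed partial derivative of order ≤ 2
decays like `r^{-μ-i}` where `i` is the number of differentiations in `r`. -/
def O2decay (e : ℝ → ℝ → ℝ) (μ : ℝ) : Prop :=
  ∃ C > 0, ∃ R > 0, ∀ i j : ℕ, i + j ≤ 2 → ∀ r ≥ R, ∀ φ : ℝ,
    |iteratedDeriv i (fun r' => iteratedDeriv j (fun φ' => e r' φ') φ) r| ≤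
      C * r ^ (-μ - (i : ℝ))

/-- The cone metric `g_α = dr⊗dr + r² sin²α dφ⊗dφ`, written in Cartesian
coordinates on `ℝ² ∖ {0}`. -/
def coneg (α : ℝ) : Pt → Fin 2 → Fin 2 → ℝ := fun x i j =>
  Real.sin α ^ 2 * (if i = j then 1 else 0) + (1 - Real.sin α ^ 2) * (x i * x j) / eip x x

/-- `g` is an asymptotically conical metric on `ℝ² ∖ {0}`, of asymptotic angle `α`
and asymptotic decay rate `μ`:  in polar coordinates,
`g = (1+e_rr) dr⊗dr + (1+e_φφ) r² sin²α dφ⊗dφ + 2 e_rφ r dr⊗dφ` with all the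
error terms of class `O₂(r^{-μ})`. -/
def IsACMetric (g : Pt → Fin 2 → Fin 2 → ℝ) (α μ : ℝ) : Prop :=
  RG.IsMetricOn g {x : Pt | x ≠ 0} ∧ α ∈ Ioc 0 (π / 2) ∧ 0 < μ ∧
  O2decay (fun r φ => polarComp g 0 0 r φ - 1) μ ∧
  O2decay (fun r φ => polarComp g 0 1 r φ / r) μ ∧
  O2decay (fun r φ => polarComp g 1 1 r φ / (r ^ 2 * Real.sin α ^ 2) - 1) μ

/-- The pushforward of the metric `g` under a diffeomorphism with inverse `Ψ`. -/
def pushMetric (g : Pt → Fin 2 → Fin 2 → ℝ) (Ψ : Pt → Pt) : Pt → Fin 2 → Fin 2 → ℝ :=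
  fun y i j => RG.ip g (Ψ y) (fderiv ℝ Ψ y (Pi.single i 1)) (fderiv ℝ Ψ y (Pi.single j 1))

/-- An asymptotically conical surface `(S, g)` of asymptotic angle `α ∈ (0, π/2]` and
decay rate `μ > 0`:  the (complete) surface is realized in global coordinates as the
plane `ℝ²` endowed with a complete Riemannian metric `g`; `Φ` is the diffeomorphism
from the complement of the compact set `Z` onto `ℝ² ∖ {0}` (with inverse `Ψ`) in
which the metric is asymptotically conical. -/
structure ACSurface (α μ : ℝ) where
  g : Pt → Fin 2 → Fin 2 → ℝ
  metric : RG.IsMetricOn g univ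
  complete : RG.CompleteWith (RG.pdist g univ)
  Z : Set Pt
  compactZ : IsCompact Z
  Φ : Pt → Pt
  Ψ : Pt → Pt
  Φmaps : MapsTo Φ Zᶜ {x : Pt | x ≠ 0}
  Ψmaps : MapsTo Ψ {x : Pt | x ≠ 0} Zᶜ
  leftInv : ∀ x ∈ Zᶜ, Ψ (Φ x) = x
  rightInv : ∀ y ∈ {x : Pt | x ≠ 0}, Φ (Ψ y) = y
  Φsmooth : ContDiffOn ℝ (⊤ : ℕ∞) Φ Zᶜ
  Ψsmooth : ContDiffOn ℝ (⊤ : ℕ∞) Ψ {x : Pt | x ≠ 0}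
  conical : IsACMetric (pushMetric g Ψ) α μ

/- ------------------------------------------------------------------------ -/
/- Geodesic lines and Morse index.                                          -/
/- ------------------------------------------------------------------------ -/

/-- A properly embedded geodesic line of the metric `g`, parametrized by arc length. -/
def IsGeodesicLine (g : Pt → Fin 2 → Fin 2 → ℝ) (γ : ℝ → Pt) : Prop :=
  RG.IsGeodesicOn g univ γ univ ∧ RG.UnitSpeedOn g γ univ ∧ Function.Injective γ ∧
    Tendsto γ (cocompact ℝ) (cocompact Pt)

/-- The index form (second variation of length along normal variations `u·n`) of a
unit-speed geodesic line. -/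
def lineIndexForm (g : Pt → Fin 2 → Fin 2 → ℝ) (γ : ℝ → Pt) (u : ℝ → ℝ) : ℝ :=
  ∫ t : ℝ, ((deriv u t) ^ 2 - RG.gauss g (γ t) * (u t) ^ 2)

/-- The Morse index of the geodesic line `γ` (for the length functional, among
compactly supported normal variations) is at most `n`. -/
def LineIndexLE (g : Pt → Fin 2 → Fin 2 → ℝ) (γ : ℝ → Pt) (n : ℕ) : Prop :=
  ∀ W : Submodule ℝ (ℝ → ℝ),
    (∀ u ∈ W, ContDiff ℝ (⊤ : ℕ∞) u ∧ HasCompactSupport u) →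
    (∀ u ∈ W, u ≠ 0 → lineIndexForm g γ u < 0) →
    Module.rank ℝ W ≤ n

/- ------------------------------------------------------------------------ -/
/- The min-max apparatus: the space X, sweepouts, and the min-max value.    -/
/- ------------------------------------------------------------------------ -/

/-- `W^{1,2}` regularity for a path `[0,1] → ℝ²` (absolute continuity together with
square-integrability of the derivative). -/
def W12 (γ : ℝ → Pt) : Prop :=
  ContinuousOn γ (Icc 0 1) ∧
  (∀ a ∈ Icc (0:ℝ) 1, ∀ b ∈ Icc (0:ℝ) 1, γ b - γ a = ∫ t in a..b, deriv γ t) ∧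
  IntervalIntegrable (fun t => eip (deriv γ t) (deriv γ t)) volume 0 1

/-- Membership in `X = {γ ∈ W^{1,2}([0,1]) : γ(0) = p, γ(1) = q}`. -/
def InX (p q : Pt) (γ : ℝ → Pt) : Prop := W12 γ ∧ γ 0 = p ∧ γ 1 = q

/-- The `W^{1,2}` distance between two paths. -/
def XDist (γ σ : ℝ → Pt) : ℝ :=
  Real.sqrt (∫ t in (0:ℝ)..1,
    (eip (γ t - σ t) (γ t - σ t) + eip (deriv γ t - deriv σ t) (deriv γ t - deriv σ t)))

/-- Membership in the class `Σ` of sweepouts: `H` is a continuous path in `X`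
joining `γ₁` to `γ₂`. -/
def InSigma (p q : Pt) (γ₁ γ₂ : ℝ → Pt) (H : ℝ → ℝ → Pt) : Prop :=
  H 0 = γ₁ ∧ H 1 = γ₂ ∧ (∀ s ∈ Icc (0:ℝ) 1, InX p q (H s)) ∧
  ∀ s₀ ∈ Icc (0:ℝ) 1, ∀ ε > 0, ∃ δ > 0, ∀ s ∈ Icc (0:ℝ) 1, |s - s₀| < δ →
    XDist (H s) (H s₀) < ε

/-- The largest energy of a slice of the sweepout `H`. -/
def maxE (g : Pt → Fin 2 → Fin 2 → ℝ) (H : ℝ → ℝ → Pt) : ℝ :=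
  sSup ((fun s => RG.energy g (H s) 0 1) '' Icc 0 1)

/-- The min-max value `Λ = inf_{H ∈ Σ} max_{s} E(H(s))`. -/
def minmax (g : Pt → Fin 2 → Fin 2 → ℝ) (p q : Pt) (γ₁ γ₂ : ℝ → Pt) : ℝ :=
  sInf {v : ℝ | ∃ H : ℝ → ℝ → Pt, InSigma p q γ₁ γ₂ H ∧ v = maxE g H}

/-- Second variation of the energy at the path `γ` along the variation field `V`. -/
def segIndexForm (g : Pt → Fin 2 → Fin 2 → ℝ) (γ V : ℝ → Pt) : ℝ :=
  iteratedDeriv 2 (fun s : ℝ => RG.energy g (fun t => γ t + s • V t) 0 1) 0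

/-- The Morse index of the geodesic segment `γ`, as a critical point of the energy
functional on paths with fixed endpoints, is at most `n`. -/
def SegIndexLE (g : Pt → Fin 2 → Fin 2 → ℝ) (γ : ℝ → Pt) (n : ℕ) : Prop :=
  ∀ W : Submodule ℝ (ℝ → Pt),
    (∀ V ∈ W, ContDiff ℝ (⊤ : ℕ∞) V ∧ V 0 = 0 ∧ V 1 = 0) →
    (∀ V ∈ W, V ≠ 0 → segIndexForm g γ V < 0) →
    Module.rank ℝ W ≤ n

/- ------------------------------------------------------------------------ -/
/- Geometric (local smooth graphical) convergence of 1-dimensional sets.    -/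
/- ------------------------------------------------------------------------ -/

/-- Open coordinate rectangle. -/
def Rect2 (δ₁ δ₂ : ℝ) : Set Pt := {x : Pt | |x 0| < δ₁ ∧ |x 1| < δ₂}

/-- Geometric convergence, with multiplicity `m`, of the sequence of 1-dimensional
sets `Γs k` to the curve `Γ`: around every point of `Γ` there is a straightening
chart in which `Γ` is the horizontal axis and, for `k` large, `Γs k` consists of
exactly `m` ordered smooth graphs converging to `0` in `C^∞`. -/
def GeomConv (m : ℕ) (Γs : ℕ → Set Pt) (Γ : Set Pt) : Prop :=
  ∀ p ∈ Γ, ∃ (δ₁ δ₂ : ℝ) (U : Set Pt) (ψ ψi : Pt → Pt),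
    0 < δ₁ ∧ 0 < δ₂ ∧ IsOpen U ∧ p ∈ U ∧
    ContDiffOn ℝ (⊤ : ℕ∞) ψ U ∧ ContDiffOn ℝ (⊤ : ℕ∞) ψi (Rect2 δ₁ δ₂) ∧
    (∀ x ∈ U, ψi (ψ x) = x) ∧ ψ '' U = Rect2 δ₁ δ₂ ∧
    ψ '' (Γ ∩ U) = {x ∈ Rect2 δ₁ δ₂ | x 1 = 0} ∧
    ∃ f : ℕ → Fin m → ℝ → ℝ,
      (∃ k₀ : ℕ, ∀ k ≥ k₀,
        (∀ i, ContDiff ℝ (⊤ : ℕ∞) (f k i)) ∧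
        (∀ i j : Fin m, i < j → ∀ s : ℝ, |s| < δ₁ → f k i s < f k j s) ∧
        ψ '' (Γs k ∩ U) = {x ∈ Rect2 δ₁ δ₂ | ∃ i : Fin m, x 1 = f k i (x 0)}) ∧
      ∀ (d : ℕ) (ε : ℝ), 0 < ε → ∃ k₁ : ℕ, ∀ k ≥ k₁, ∀ i : Fin m, ∀ s : ℝ, |s| < δ₁ →
        |iteratedDeriv d (f k i) s| < ε

/-- Rescaling of a subset of the plane by the factor `λ⁻¹`. -/
def rescale (lam : ℝ) (A : Set Pt) : Set Pt := (fun x : Pt => lam⁻¹ • x) '' A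

/-- `A` is the support of one of the two smooth geodesics of the cone `C_α` joining the
antipodal points at unit distance from the vertex with angles `φ₀` and `φ₀ + π`
(i.e. `A` is `Γ'` or `Γ''`). -/
def IsUnitConeGeodesicArc (α φ₀ : ℝ) (A : Set Pt) : Prop :=
  ∃ c : ℝ → Pt, RG.IsGeodesicOn (coneg α) {x : Pt | x ≠ 0} c (Icc 0 1) ∧
    c 0 = pol 1 φ₀ ∧ c 1 = pol 1 (φ₀ + π) ∧ InjOn c (Icc 0 1) ∧
    A = c '' Icc 0 1 ∧ RG.length (coneg α) c 0 1 = 2 * Real.sin (π / 2 * Real.sin α)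

/- ------------------------------------------------------------------------ -/
/- The family of the two "stable" geodesics between antipodal points, and Λ. -/
/- ------------------------------------------------------------------------ -/

/-- `γ1 r₀ φ₀` and `γ2 r₀ φ₀` are, for every `r₀ ≥ rbar` and every `φ₀`, two distinct
simple geodesics connecting the antipodal points at `(r₀, φ₀)` and `(r₀, φ₀ + π)`,
disjoint except at the endpoints. -/
def TwoGeodesics {α μ : ℝ} (S : ACSurface α μ) (rbar : ℝ) (γ1 γ2 : ℝ → ℝ → ℝ → Pt) : Prop :=
  ∀ r₀ ≥ rbar, ∀ φ₀ : ℝ,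
    RG.IsGeodesicOn S.g univ (γ1 r₀ φ₀) (Icc 0 1) ∧
    RG.IsGeodesicOn S.g univ (γ2 r₀ φ₀) (Icc 0 1) ∧
    γ1 r₀ φ₀ 0 = S.Ψ (pol r₀ φ₀) ∧ γ1 r₀ φ₀ 1 = S.Ψ (pol r₀ (φ₀ + π)) ∧
    γ2 r₀ φ₀ 0 = S.Ψ (pol r₀ φ₀) ∧ γ2 r₀ φ₀ 1 = S.Ψ (pol r₀ (φ₀ + π)) ∧
    InjOn (γ1 r₀ φ₀) (Icc 0 1) ∧ InjOn (γ2 r₀ φ₀) (Icc 0 1) ∧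
    γ1 r₀ φ₀ '' Icc 0 1 ≠ γ2 r₀ φ₀ '' Icc 0 1 ∧
    (γ1 r₀ φ₀ '' Icc 0 1) ∩ (γ2 r₀ φ₀ '' Icc 0 1) =
      {S.Ψ (pol r₀ φ₀), S.Ψ (pol r₀ (φ₀ + π))}

/-- The min-max value `Λ(r₀, φ₀)` associated with the sweepouts joining the two
stable geodesics `γ1 r₀ φ₀` and `γ2 r₀ φ₀`. -/
def LambdaVal {α μ : ℝ} (S : ACSurface α μ) (γ1 γ2 : ℝ → ℝ → ℝ → Pt) (r₀ φ₀ : ℝ) : ℝ :=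
  minmax S.g (S.Ψ (pol r₀ φ₀)) (S.Ψ (pol r₀ (φ₀ + π))) (γ1 r₀ φ₀) (γ2 r₀ φ₀)

/- ------------------------------------------------------------------------ -/
/- Wedge coordinates.                                                       -/
/- ------------------------------------------------------------------------ -/

/-- The point of the asymptotic region whose *wedge* Cartesian coordinates (with
rotation offset `φ₀`) are `(x₁, x₂)`:  here `ρ = √(x₁² + x₂²)`, `θ = arctan (x₂/x₁)`
and `φ = φ₀ + θ / sin α`. -/
def wedgePt (α φ₀ x₁ x₂ : ℝ) : Pt :=
  pol (Real.sqrt (x₁ ^ 2 + x₂ ^ 2)) (φ₀ + Real.arctan (x₂ / x₁) / Real.sin α)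

/- ------------------------------------------------------------------------ -/
/- Generic homotopies, regular curves, Reidemeister events.                 -/
/- ------------------------------------------------------------------------ -/

/-- The metric ball of `(S, g)` centered at `p` with radius `δ`. -/
def gball (g : Pt → Fin 2 → Fin 2 → ℝ) (p : Pt) (δ : ℝ) : Set Pt :=
  {x : Pt | RG.pdist g univ p x < δ}

/-- The curve is an immersion on `[0,1]`. -/
def ImmersedOn (γ : ℝ → Pt) : Prop := ∀ t ∈ Icc (0:ℝ) 1, deriv γ t ≠ 0

/-- `(t₁, t₂)` is a self-intersection of the curve `γ`. -/
def SelfInt (γ : ℝ → Pt) (t₁ t₂ : ℝ) : Prop :=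
  t₁ ∈ Icc (0:ℝ) 1 ∧ t₂ ∈ Icc (0:ℝ) 1 ∧ t₁ ≠ t₂ ∧ γ t₁ = γ t₂

/-- The self-intersection at `(t₁, t₂)` is transverse. -/
def TransverseAt (γ : ℝ → Pt) (t₁ t₂ : ℝ) : Prop :=
  ∀ c : ℝ, deriv γ t₁ ≠ c • deriv γ t₂

/-- All self-intersections of `γ` are transverse. -/
def OnlyTransverse (γ : ℝ → Pt) : Prop := ∀ t₁ t₂ : ℝ, SelfInt γ t₁ t₂ → TransverseAt γ t₁ t₂

/-- `γ` has no triple points. -/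
def NoTriple (γ : ℝ → Pt) : Prop :=
  ∀ t₁ t₂ t₃ : ℝ, t₁ ∈ Icc (0:ℝ) 1 → t₂ ∈ Icc (0:ℝ) 1 → t₃ ∈ Icc (0:ℝ) 1 →
    t₁ ≠ t₂ → t₂ ≠ t₃ → t₁ ≠ t₃ → ¬(γ t₁ = γ t₂ ∧ γ t₂ = γ t₃)

/-- A regular slice: an immersion with only transverse double-point
self-intersections and no triple points. -/
def RegularCurve (γ : ℝ → Pt) : Prop := ImmersedOn γ ∧ OnlyTransverse γ ∧ NoTriple γ

/-- Singular event of the first Reidemeister type (birth/death of a loop: a single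
cusp, all self-intersections transverse, no triple points). -/
def R1Event (γ : ℝ → Pt) : Prop :=
  OnlyTransverse γ ∧ NoTriple γ ∧
  ∃ t₀ ∈ Icc (0:ℝ) 1, deriv γ t₀ = 0 ∧ ∀ t ∈ Icc (0:ℝ) 1, t ≠ t₀ → deriv γ t ≠ 0

/-- Singular event of the second Reidemeister type (a single tangential
self-intersection, all the others transverse; an immersion without triple points). -/
def R2Event (γ : ℝ → Pt) : Prop :=
  ImmersedOn γ ∧ NoTriple γ ∧
  ∃ t₁ t₂ : ℝ, SelfInt γ t₁ t₂ ∧ ¬TransverseAt γ t₁ t₂ ∧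
    ∀ s₁ s₂ : ℝ, SelfInt γ s₁ s₂ → ({s₁, s₂} : Set ℝ) = {t₁, t₂} ∨ TransverseAt γ s₁ s₂

/-- Singular event of the third Reidemeister type (a single triple point; an
immersion with transverse self-intersections). -/
def R3Event (γ : ℝ → Pt) : Prop :=
  ImmersedOn γ ∧ OnlyTransverse γ ∧
  ∃ t₁ t₂ t₃ : ℝ, t₁ ∈ Icc (0:ℝ) 1 ∧ t₂ ∈ Icc (0:ℝ) 1 ∧ t₃ ∈ Icc (0:ℝ) 1 ∧
    t₁ ≠ t₂ ∧ t₂ ≠ t₃ ∧ t₁ ≠ t₃ ∧ γ t₁ = γ t₂ ∧ γ t₂ = γ t₃ ∧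
    ∀ s₁ s₂ s₃ : ℝ, s₁ ∈ Icc (0:ℝ) 1 → s₂ ∈ Icc (0:ℝ) 1 → s₃ ∈ Icc (0:ℝ) 1 →
      s₁ ≠ s₂ → s₂ ≠ s₃ → s₁ ≠ s₃ → γ s₁ = γ s₂ → γ s₂ = γ s₃ →
      ({s₁, s₂, s₃} : Set ℝ) = {t₁, t₂, t₃}

/-- A generic homotopy in `Σ` (in the sense of Lemma `generic`): a smooth sweepout,
all of whose slices are regular curves away from finitely many singular times, where
single Reidemeister moves occur; moreover, near the two endpoints `p, q`, all slices
are embedded immersions. -/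
def GenericHomotopy (g : Pt → Fin 2 → Fin 2 → ℝ) (p q : Pt) (γ₁ γ₂ : ℝ → Pt)
    (H : ℝ → ℝ → Pt) : Prop :=
  InSigma p q γ₁ γ₂ H ∧
  ContDiffOn ℝ (⊤ : ℕ∞) (fun st : ℝ × ℝ => H st.1 st.2) (Icc 0 1 ×ˢ Icc 0 1) ∧
  (∃ (k : ℕ) (sing : Fin k → ℝ), StrictMono sing ∧ (∀ i, sing i ∈ Icc (0:ℝ) 1) ∧
    (∀ s ∈ Icc (0:ℝ) 1, s ∉ Set.range sing → RegularCurve (H s)) ∧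
    (∀ i, R1Event (H (sing i)) ∨ R2Event (H (sing i)) ∨ R3Event (H (sing i)))) ∧
  (∃ δ > 0, ∀ s ∈ Icc (0:ℝ) 1,
    (∀ t₁ t₂ : ℝ, SelfInt (H s) t₁ t₂ → H s t₁ ∉ gball g p δ ∪ gball g q δ) ∧
    (∀ t ∈ Icc (0:ℝ) 1, H s t ∈ gball g p δ ∪ gball g q δ → deriv (H s) t ≠ 0))

/- ------------------------------------------------------------------------ -/
/- The half-disk condition.                                                 -/
/- ------------------------------------------------------------------------ -/

/-- The closed upper half-disk in `ℂ`. -/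
def HalfDisk : Set ℂ := {z : ℂ | ‖z‖ ≤ 1 ∧ 0 ≤ z.im}

/-- The supports of `γ₁` and `γ₂` bound a closed region which is `C¹`-diffeomorphic
to the closed upper half-disk. -/
def BoundHalfDisk (γ₁ γ₂ : ℝ → Pt) : Prop :=
  ∃ (Ω : Set Pt) (F : ℂ → Pt) (G : Pt → ℂ),
    IsCompact Ω ∧ frontier Ω = γ₁ '' Icc 0 1 ∪ γ₂ '' Icc 0 1 ∧
    F '' HalfDisk = Ω ∧ InjOn F HalfDisk ∧ ContDiffOn ℝ 1 F HalfDisk ∧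
    ContDiffOn ℝ 1 G Ω ∧ ∀ z ∈ HalfDisk, G (F z) = z

lemma eip_expand (v w : Pt) : eip v w = v 0 * w 0 + v 1 * w 1 := by
  simp [eip, Fin.sum_univ_two]

lemma eip_pos {x : Pt} (hx : x ≠ 0) : 0 < eip x x := by
  rw [eip_expand]
  rcases lt_or_eq_of_le (by nlinarith [sq_nonneg (x 0), sq_nonneg (x 1)] :
      (0:ℝ) ≤ x 0 * x 0 + x 1 * x 1) with h1 | h1
  · exact h1
  · exfalso; apply hx; funext i
    have h0 : x 0 = 0 := by nlinarith [sq_nonneg (x 0), sq_nonneg (x 1)]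
    have h1' : x 1 = 0 := by nlinarith [sq_nonneg (x 0), sq_nonneg (x 1)]
    fin_cases i <;> simp [h0, h1']

lemma ip_coneg (α : ℝ) {x : Pt} (hx : x ≠ 0) (v w : Pt) :
    RG.ip (coneg α) x v w =
      Real.sin α ^ 2 * eip v w + (1 - Real.sin α ^ 2) * (eip x v * eip x w) / eip x x := by
  have hq := (eip_pos hx).ne'
  rw [eip_expand] at hq ⊢
  simp only [RG.ip, coneg, Fin.sum_univ_two, eip_expand]
  simp
  field_simp
  ring

lemma ip_coneg_radial (α : ℝ) {x : Pt} (hx : x ≠ 0) (v : Pt) :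
    RG.ip (coneg α) x v ((Real.sqrt (eip x x))⁻¹ • x) = eip x v / Real.sqrt (eip x x) := by
  have hq := (eip_pos hx)
  rw [ip_coneg α hx]
  have h1 : eip v ((Real.sqrt (eip x x))⁻¹ • x) = (Real.sqrt (eip x x))⁻¹ * eip v x := by
    simp [eip_expand, Pi.smul_apply, smul_eq_mul]; ring
  have h2 : eip x ((Real.sqrt (eip x x))⁻¹ • x) = (Real.sqrt (eip x x))⁻¹ * eip x x := by
    simp [eip_expand, Pi.smul_apply, smul_eq_mul]; ring
  rw [h1, h2]
  have hs : Real.sqrt (eip x x) ≠ 0 := by positivity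
  have hvx : eip v x = eip x v := by rw [eip_expand, eip_expand]; ring
  have hsq : Real.sqrt (eip x x) ^ 2 = eip x x := Real.sq_sqrt hq.le
  rw [hvx]
  field_simp
  ring

lemma ip_coneg_lagrange (α : ℝ) {x : Pt} (hx : x ≠ 0) (v : Pt) :
    RG.ip (coneg α) x v v =
      (eip x v)^2 / eip x x + Real.sin α ^ 2 * (x 0 * v 1 - x 1 * v 0)^2 / eip x x := by
  have hq := (eip_pos hx).ne'
  rw [eip_expand] at hq
  have hq2 : x 0 ^ 2 + x 1 ^ 2 ≠ 0 := by simpa [sq] using hq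
  rw [ip_coneg α hx, eip_expand, eip_expand, eip_expand]
  field_simp
  ring

lemma hasFDerivAt_eip :
    ∀ x : Pt, HasFDerivAt (fun y : Pt => eip y y)
      ((x 0 • ContinuousLinearMap.proj 0 + x 0 • ContinuousLinearMap.proj 0) +
       (x 1 • ContinuousLinearMap.proj 1 + x 1 • ContinuousLinearMap.proj 1) :
        Pt →L[ℝ] ℝ) x := by
  intro x
  have h : (fun y : Pt => eip y y) = fun y : Pt => y 0 * y 0 + y 1 * y 1 := by
    funext y; rw [eip_expand]
  rw [h]
  exact ((hasFDerivAt_apply 0 x).mul (hasFDerivAt_apply 0 x)).add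
    ((hasFDerivAt_apply 1 x).mul (hasFDerivAt_apply 1 x))

lemma hasFDerivAt_coneg (α : ℝ) {x : Pt} (hx : x ≠ 0) (i j : Fin 2) :
    ∃ D : Pt →L[ℝ] ℝ, HasFDerivAt (fun y => coneg α y i j) D x ∧
      ∀ l : Fin 2, D (Pi.single l 1) =
        (1 - Real.sin α ^ 2) *
          (((if i = l then 1 else 0) * x j + x i * (if j = l then 1 else 0)) * eip x x
            - x i * x j * (2 * x l)) / (eip x x) ^ 2 := by
  have hq : eip x x ≠ 0 := (eip_pos hx).ne'
  have hnum : HasFDerivAt (fun y : Pt => (1 - Real.sin α ^ 2) * (y i * y j))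
      ((1 - Real.sin α ^ 2) •
        (((x i) • ContinuousLinearMap.proj j + (x j) • ContinuousLinearMap.proj i : Pt →L[ℝ] ℝ))) x :=
    ((hasFDerivAt_apply i x).mul (hasFDerivAt_apply j x)).const_mul _
  have hE := hasFDerivAt_eip x
  have hinv := HasFDerivAt.comp (g := fun t : ℝ => t⁻¹) (f := fun y : Pt => eip y y)
      x (hasFDerivAt_inv hq) hE
  have hmul := hnum.mul hinv
  have hfull := hmul.const_add (Real.sin α ^ 2 * (if i = j then 1 else 0))
  have heq : (fun y : Pt => Real.sin α ^ 2 * (if i = j then 1 else 0) +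
      ((fun y : Pt => (1 - Real.sin α ^ 2) * (y i * y j)) * ((fun t : ℝ => t⁻¹) ∘ fun y : Pt => eip y y) : Pt → ℝ) y)
      = fun y => coneg α y i j := by
    funext y; simp only [Pi.mul_apply, Function.comp_apply, coneg]; ring
  rw [heq] at hfull
  refine ⟨_, hfull, fun l => ?_⟩
  have hE2 : ∀ u : Pt, ((x 0 • ContinuousLinearMap.proj 0 + x 0 • ContinuousLinearMap.proj 0) +
       (x 1 • ContinuousLinearMap.proj 1 + x 1 • ContinuousLinearMap.proj 1) :
        Pt →L[ℝ] ℝ) u = 2 * (x 0 * u 0) + 2 * (x 1 * u 1) := by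
    intro u
    simp only [ContinuousLinearMap.add_apply, ContinuousLinearMap.coe_smul', Pi.smul_apply,
      ContinuousLinearMap.proj_apply, smul_eq_mul]
    ring
  simp only [ContinuousLinearMap.add_apply, ContinuousLinearMap.smul_apply,
    ContinuousLinearMap.comp_apply, ContinuousLinearMap.coe_smul', Pi.smul_apply,
    ContinuousLinearMap.proj_apply, ContinuousLinearMap.smulRight_apply,
    ContinuousLinearMap.one_apply, smul_eq_mul, hE2, ContinuousLinearMap.toSpanSingleton_apply,
    Function.comp_apply]
  have hs : ∀ m : Fin 2, (Pi.single l 1 : Pt) m = if m = l then 1 else 0 := by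
    intro m; rw [Pi.single_apply]
  rw [hs, hs, hs, hs]
  have h2l : 2 * (x 0 * if (0:Fin 2) = l then 1 else 0) + 2 * (x 1 * if (1:Fin 2) = l then 1 else 0)
      = 2 * x l := by fin_cases l <;> norm_num
  rw [h2l]
  field_simp
  ring

lemma dg_coneg (α : ℝ) {x : Pt} (hx : x ≠ 0) (l i j : Fin 2) :
    RG.dg (coneg α) l x i j =
      (1 - Real.sin α ^ 2) *
        (((if i = l then 1 else 0) * x j + x i * (if j = l then 1 else 0)) * eip x x
          - x i * x j * (2 * x l)) / (eip x x) ^ 2 := by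
  have hDs := fun i j => hasFDerivAt_coneg α hx i j
  choose D hD hval using hDs
  set Φ' : Pt →L[ℝ] (Fin 2 → Fin 2 → ℝ) :=
    ContinuousLinearMap.pi (fun i => ContinuousLinearMap.pi (fun j => D i j)) with hΦ'
  have hfull : HasFDerivAt (coneg α) Φ' x := by
    rw [hasFDerivAt_pi']
    intro i
    rw [hasFDerivAt_pi']
    intro j
    have hcomp : (ContinuousLinearMap.proj j).comp
        ((ContinuousLinearMap.proj i).comp Φ') = D i j := by
      ext u
      simp [hΦ', ContinuousLinearMap.pi_apply]
    rw [hcomp]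
    exact hD i j
  have : RG.dg (coneg α) l x = fun i j => D i j (Pi.single l 1) := by
    rw [RG.dg, hfull.fderiv]
    rfl
  rw [this]; exact hval i j l

lemma ginv_coneg (α : ℝ) (hsin : Real.sin α ≠ 0) {x : Pt} (hx : x ≠ 0) (k l : Fin 2) :
    RG.ginv (coneg α) x k l =
      (Real.sin α ^ 2)⁻¹ * (if k = l then 1 else 0) +
        (1 - (Real.sin α ^ 2)⁻¹) * (x k * x l) / eip x x := by
  have hq : (0:ℝ) < eip x x := eip_pos hx
  rw [eip_expand] at hq
  have hq2 : x 0 ^ 2 + x 1 ^ 2 ≠ 0 := by nlinarith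
  set B : Matrix (Fin 2) (Fin 2) ℝ := Matrix.of (fun k l : Fin 2 =>
    (Real.sin α ^ 2)⁻¹ * (if k = l then 1 else 0) +
      (1 - (Real.sin α ^ 2)⁻¹) * (x k * x l) / eip x x) with hB
  have hright : Matrix.of (coneg α x) * B = 1 := by
    ext a b
    simp only [Matrix.mul_apply, Fin.sum_univ_two, Matrix.of_apply, coneg, eip_expand,
      Matrix.one_apply, hB]
    fin_cases a <;> fin_cases b <;> simp <;> field_simp <;> ring
  have hinv := Matrix.inv_eq_right_inv hright
  rw [RG.ginv, hinv, hB]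
  rfl

set_option maxHeartbeats 1000000 in

lemma christoffel_coneg (α : ℝ) (hsin : Real.sin α ≠ 0) {x : Pt} (hx : x ≠ 0) (k i j : Fin 2) :
    RG.christoffel (coneg α) x k i j =
      (1 - Real.sin α ^ 2) / eip x x *
        ((if i = j then 1 else 0) - x i * x j / eip x x) * x k := by
  have hq : (0:ℝ) < eip x x := eip_pos hx
  rw [RG.christoffel, Fin.sum_univ_two]
  simp only [dg_coneg α hx, ginv_coneg α hsin hx]
  rw [eip_expand] at hq ⊢
  have hq2 : x 0 ^ 2 + x 1 ^ 2 ≠ 0 := by nlinarith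
  fin_cases i <;> fin_cases j <;> fin_cases k <;> simp <;> field_simp <;> ring

lemma cross_hasDerivAt (α : ℝ) (hsin : Real.sin α ≠ 0) {γ : ℝ → Pt}
    (hgeo : RG.IsGeodesicOn (coneg α) {x : Pt | x ≠ 0} γ (Ioo 0 1))
    {t : ℝ} (ht : t ∈ Ioo (0:ℝ) 1) :
    HasDerivAt (fun u => γ u 0 * deriv γ u 1 - γ u 1 * deriv γ u 0) 0 t := by
  obtain ⟨hmem, hC2, hacc⟩ := hgeo
  have hop : IsOpen (Ioo (0:ℝ) 1) := isOpen_Ioo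
  have hnb : Ioo (0:ℝ) 1 ∈ 𝓝 t := hop.mem_nhds ht
  have hdγ : HasDerivAt γ (deriv γ t) t :=
    (((hC2.differentiableOn (by norm_num)) t ht).differentiableAt hnb).hasDerivAt
  have hC1' : ContDiffOn ℝ 1 (derivWithin γ (Ioo 0 1)) (Ioo 0 1) :=
    hC2.derivWithin hop.uniqueDiffOn (by norm_num)
  have hC1'' : ContDiffOn ℝ 1 (deriv γ) (Ioo 0 1) :=
    hC1'.congr (fun s hs => (derivWithin_of_isOpen hop hs).symm)
  have hdd : HasDerivAt (deriv γ) (deriv (deriv γ) t) t :=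
    (((hC1''.differentiableOn (by norm_num)) t ht).differentiableAt hnb).hasDerivAt
  have hx0 := (hasDerivAt_pi.1 hdγ) 0
  have hx1 := (hasDerivAt_pi.1 hdγ) 1
  have hv0 := (hasDerivAt_pi.1 hdd) 0
  have hv1 := (hasDerivAt_pi.1 hdd) 1
  have hprod := (hx0.mul hv1).sub (hx1.mul hv0)
  have hxne : γ t ≠ 0 := hmem t ht
  have hcross : ∀ i j : Fin 2, γ t 0 * RG.christoffel (coneg α) (γ t) 1 i j =
      γ t 1 * RG.christoffel (coneg α) (γ t) 0 i j := by
    intro i j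
    rw [christoffel_coneg α hsin hxne, christoffel_coneg α hsin hxne]
    ring
  have e0 := congrFun (hacc t ht) 0
  have e1 := congrFun (hacc t ht) 1
  simp only [RG.acc, Fin.sum_univ_two, Pi.zero_apply] at e0 e1
  have hval : deriv γ t 0 * deriv γ t 1 + γ t 0 * deriv (deriv γ) t 1 -
      (deriv γ t 1 * deriv γ t 0 + γ t 1 * deriv (deriv γ) t 0) = 0 := by
    linear_combination (γ t 0) * e1 - (γ t 1) * e0 -
      (deriv γ t 0 * deriv γ t 0) * hcross 0 0 - (deriv γ t 0 * deriv γ t 1) * hcross 0 1 -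
      (deriv γ t 1 * deriv γ t 0) * hcross 1 0 - (deriv γ t 1 * deriv γ t 1) * hcross 1 1
  rw [hval] at hprod
  exact hprod

lemma eip_self_nonneg (v : Pt) : 0 ≤ eip v v := by rw [eip_expand]; nlinarith [sq_nonneg (v 0), sq_nonneg (v 1)]

lemma ip_coneg_ge (α : ℝ) (x v : Pt) :
    Real.sin α ^ 2 * eip v v ≤ RG.ip (coneg α) x v v := by
  have hs0 : (0:ℝ) ≤ Real.sin α ^ 2 := sq_nonneg _
  have hs1 : Real.sin α ^ 2 ≤ 1 := Real.sin_sq_le_one α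
  rcases eq_or_ne x 0 with rfl | hx
  · have : RG.ip (coneg α) 0 v v = Real.sin α ^ 2 * eip v v := by
      simp [RG.ip, coneg, Fin.sum_univ_two, eip_expand]
      ring
    rw [this]
  · have hq : 0 < eip x x := eip_pos hx
    rw [ip_coneg_lagrange α hx]
    have hiden : eip v v * eip x x = (eip x v)^2 + (x 0 * v 1 - x 1 * v 0)^2 := by
      rw [eip_expand, eip_expand, eip_expand]; ring
    rw [← add_div, le_div_iff₀ hq]
    nlinarith [sq_nonneg (eip x v), sq_nonneg (x 0 * v 1 - x 1 * v 0)]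

lemma ip_coneg_le (α : ℝ) (x v : Pt) :
    RG.ip (coneg α) x v v ≤ eip v v := by
  have hs0 : (0:ℝ) ≤ Real.sin α ^ 2 := sq_nonneg _
  have hs1 : Real.sin α ^ 2 ≤ 1 := Real.sin_sq_le_one α
  rcases eq_or_ne x 0 with rfl | hx
  · have : RG.ip (coneg α) 0 v v = Real.sin α ^ 2 * eip v v := by
      simp [RG.ip, coneg, Fin.sum_univ_two, eip_expand]
      ring
    rw [this]
    nlinarith [eip_self_nonneg v]
  · have hq : 0 < eip x x := eip_pos hx
    rw [ip_coneg_lagrange α hx]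
    have hiden : eip v v * eip x x = (eip x v)^2 + (x 0 * v 1 - x 1 * v 0)^2 := by
      rw [eip_expand, eip_expand, eip_expand]; ring
    rw [← add_div, div_le_iff₀ hq]
    nlinarith [sq_nonneg (x 0 * v 1 - x 1 * v 0)]

lemma norm_le_sqrt_eip (v : Pt) : ‖v‖ ≤ Real.sqrt (eip v v) := by
  rw [pi_norm_le_iff_of_nonneg (Real.sqrt_nonneg _)]
  intro i
  rw [Real.norm_eq_abs, ← Real.sqrt_sq_eq_abs]
  apply Real.sqrt_le_sqrt
  rw [eip_expand]
  fin_cases i <;> simp <;> nlinarith [sq_nonneg (v 0), sq_nonneg (v 1)]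

lemma eip_le_two_norm_sq (v : Pt) : eip v v ≤ 2 * ‖v‖ ^ 2 := by
  have h0 := norm_le_pi_norm v 0
  have h1 := norm_le_pi_norm v 1
  rw [Real.norm_eq_abs] at h0 h1
  rw [eip_expand]
  nlinarith [abs_nonneg (v 0), abs_nonneg (v 1), sq_abs (v 0), sq_abs (v 1),
    norm_nonneg v]

lemma length_ge (α : ℝ) (hsin : 0 < Real.sin α) {x : Pt} {σ : ℝ → Pt}
    (h0 : σ 0 = x) (h1 : σ 1 = 0) (hC1 : ContDiffOn ℝ 1 σ (Icc 0 1)) :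
    Real.sin α * ‖x‖ ≤ RG.length (coneg α) σ 0 1 := by
  set D := derivWithin σ (Icc (0:ℝ) 1) with hD
  have hDcont : ContinuousOn D (Icc 0 1) :=
    hC1.continuousOn_derivWithin (uniqueDiffOn_Icc one_pos) le_rfl
  have hDA : ∀ t ∈ Ioo (0:ℝ) 1, HasDerivAt σ (D t) t := by
    intro t ht
    have hnb : Icc (0:ℝ) 1 ∈ 𝓝 t := Icc_mem_nhds ht.1 ht.2
    have h' := ((hC1.differentiableOn (by norm_num)) t (Ioo_subset_Icc_self ht)).differentiableAt hnb
    rw [hD, derivWithin_of_mem_nhds hnb]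
    exact h'.hasDerivAt
  have hDI : IntervalIntegrable D volume 0 1 := by
    apply ContinuousOn.intervalIntegrable
    rwa [uIcc_of_le zero_le_one]
  have hFTC : ∫ t in (0:ℝ)..1, D t = σ 1 - σ 0 :=
    intervalIntegral.integral_eq_sub_of_hasDeriv_right_of_le zero_le_one hC1.continuousOn
      (fun t ht => (hDA t ht).hasDerivWithinAt) hDI
  have hnx : ‖x‖ ≤ ∫ t in (0:ℝ)..1, ‖D t‖ := by
    calc ‖x‖ = ‖∫ t in (0:ℝ)..1, D t‖ := by rw [hFTC, h1, h0]; simp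
    _ ≤ ∫ t in (0:ℝ)..1, ‖D t‖ := intervalIntegral.norm_integral_le_integral_norm zero_le_one
  obtain ⟨M, hM⟩ : ∃ M, ∀ t ∈ Icc (0:ℝ) 1, ‖D t‖ ≤ M :=
    isCompact_Icc.exists_bound_of_continuousOn hDcont
  set f := fun t => RG.nrm (coneg α) (σ t) (deriv σ t) with hf
  have hσae : AEMeasurable σ (volume.restrict (Ioc (0:ℝ) 1)) :=
    (hC1.continuousOn.aemeasurable measurableSet_Icc).mono_measure
      (Measure.restrict_mono Ioc_subset_Icc_self le_rfl)
  have hderivmeas : Measurable (deriv σ) := measurable_deriv σ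
  have hfae : AEMeasurable f (volume.restrict (Ioc (0:ℝ) 1)) := by
    have hσi : ∀ i : Fin 2, AEMeasurable (fun t => σ t i) (volume.restrict (Ioc (0:ℝ) 1)) :=
      fun i => (measurable_pi_apply i).comp_aemeasurable' hσae
    have hdi : ∀ i : Fin 2, AEMeasurable (fun t => deriv σ t i) (volume.restrict (Ioc (0:ℝ) 1)) :=
      fun i => ((measurable_pi_apply i).comp hderivmeas).aemeasurable
    have h2 : AEMeasurable (fun t => RG.ip (coneg α) (σ t) (deriv σ t) (deriv σ t))
        (volume.restrict (Ioc (0:ℝ) 1)) := by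
      have heq : (fun t => RG.ip (coneg α) (σ t) (deriv σ t) (deriv σ t)) = fun t =>
          ∑ i : Fin 2, ∑ j : Fin 2, (Real.sin α ^ 2 * (if i = j then 1 else 0) +
            (1 - Real.sin α ^ 2) * (σ t i * σ t j) / (σ t 0 * σ t 0 + σ t 1 * σ t 1)) *
            deriv σ t i * deriv σ t j := by
        funext t; simp only [RG.ip, coneg, eip_expand]
      rw [heq]
      apply Finset.aemeasurable_fun_sum
      intro i _
      apply Finset.aemeasurable_fun_sum
      intro j _
      apply AEMeasurable.mul
      apply AEMeasurable.mul
      · apply AEMeasurable.add aemeasurable_const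
        apply AEMeasurable.div
        · exact ((hσi i).mul (hσi j)).const_mul _
        · exact ((hσi 0).mul (hσi 0)).add ((hσi 1).mul (hσi 1))
      · exact hdi i
      · exact hdi j
    rw [hf]
    simp only [RG.nrm]
    exact Real.continuous_sqrt.measurable.comp_aemeasurable' h2
  have hmeasf : AEStronglyMeasurable f (volume.restrict (Ioc (0:ℝ) 1)) :=
    hfae.aestronglyMeasurable
  have h1ne : ∀ᵐ t : ℝ ∂volume, t ≠ (1:ℝ) := by
    have hm : volume ({(1:ℝ)} : Set ℝ) = 0 := measure_singleton 1
    rw [ae_iff]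
    simpa [not_not, Set.setOf_eq_eq_singleton] using hm
  have haeIoo : ∀ᵐ t ∂(volume.restrict (Ioc (0:ℝ) 1)), t ∈ Ioo (0:ℝ) 1 := by
    filter_upwards [ae_restrict_mem measurableSet_Ioc,
      ae_mono Measure.restrict_le_self h1ne] with t htIoc htne
    exact ⟨htIoc.1, lt_of_le_of_ne htIoc.2 htne⟩
  have hpt : ∀ t ∈ Ioo (0:ℝ) 1, Real.sin α * ‖D t‖ ≤ f t := by
    intro t ht
    have hde : deriv σ t = D t := (hDA t ht).deriv
    rw [hf]
    dsimp only
    rw [hde, RG.nrm]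
    have hb1 : ‖D t‖ ^ 2 ≤ eip (D t) (D t) := by
      have := norm_le_sqrt_eip (D t)
      nlinarith [Real.sq_sqrt (eip_self_nonneg (D t)), norm_nonneg (D t),
        Real.sqrt_nonneg (eip (D t) (D t))]
    have hb2 := ip_coneg_ge α (σ t) (D t)
    calc Real.sin α * ‖D t‖ = Real.sqrt ((Real.sin α * ‖D t‖) ^ 2) :=
          (Real.sqrt_sq (by positivity)).symm
    _ ≤ Real.sqrt (RG.ip (coneg α) (σ t) (D t) (D t)) := by
        apply Real.sqrt_le_sqrt
        have : (Real.sin α * ‖D t‖) ^ 2 = Real.sin α ^ 2 * ‖D t‖ ^ 2 := by ring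
        rw [this]
        nlinarith [sq_nonneg (Real.sin α)]
  have hub : ∀ t ∈ Ioo (0:ℝ) 1, f t ≤ Real.sqrt (2 * M ^ 2) := by
    intro t ht
    have hde : deriv σ t = D t := (hDA t ht).deriv
    rw [hf]
    dsimp only
    rw [hde, RG.nrm]
    apply Real.sqrt_le_sqrt
    have h1' := ip_coneg_le α (σ t) (D t)
    have h2' := eip_le_two_norm_sq (D t)
    have h3' := hM t (Ioo_subset_Icc_self ht)
    nlinarith [norm_nonneg (D t)]
  have hfint : IntegrableOn f (Ioc (0:ℝ) 1) volume := by
    apply Integrable.mono' (g := fun _ => Real.sqrt (2 * M ^ 2))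
    · exact integrableOn_const (by simp)
    · exact hmeasf
    · filter_upwards [haeIoo] with t ht
      rw [Real.norm_eq_abs, abs_of_nonneg (show (0:ℝ) ≤ f t from Real.sqrt_nonneg _)]
      exact hub t ht
  have hgint : IntegrableOn (fun t => Real.sin α * ‖D t‖) (Ioc (0:ℝ) 1) volume :=
    ((continuousOn_const.mul hDcont.norm).integrableOn_compact isCompact_Icc).mono_set
      Ioc_subset_Icc_self
  have hcomp : ∫ t in Ioc (0:ℝ) 1, Real.sin α * ‖D t‖ ≤ ∫ t in Ioc (0:ℝ) 1, f t := by
    apply integral_mono_ae hgint hfint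
    filter_upwards [haeIoo] with t ht
    exact hpt t ht
  have hL : RG.length (coneg α) σ 0 1 = ∫ t in Ioc (0:ℝ) 1, f t := by
    rw [RG.length, intervalIntegral.integral_of_le zero_le_one]
  calc Real.sin α * ‖x‖ ≤ Real.sin α * ∫ t in (0:ℝ)..1, ‖D t‖ :=
        mul_le_mul_of_nonneg_left hnx hsin.le
  _ = ∫ t in Ioc (0:ℝ) 1, Real.sin α * ‖D t‖ := by
      rw [intervalIntegral.integral_of_le zero_le_one, ← MeasureTheory.integral_const_mul]
  _ ≤ ∫ t in Ioc (0:ℝ) 1, f t := hcomp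
  _ = RG.length (coneg α) σ 0 1 := hL.symm

/-- Lemma 2.3, Clairaut. If a unit-speed geodesic `γ : (0,1) → C_α`
satisfies `-1 < g_α(γ', ∂_r) < 1` at some point, then there is `d₀ > 0` such that the
image of `γ` is disjoint from the metric ball `B_{d₀}(v)` around the vertex `v = 0`
of the completed cone. -/
theorem stmt_2 (α : ℝ) (hα : α ∈ Ioc 0 (π / 2)) (γ : ℝ → Pt)
    (hgeo : RG.IsGeodesicOn (coneg α) {x : Pt | x ≠ 0} γ (Ioo 0 1))
    (hunit : RG.UnitSpeedOn (coneg α) γ (Ioo 0 1))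
    (t₀ : ℝ) (ht₀ : t₀ ∈ Ioo (0:ℝ) 1)
    (hlow : -1 < RG.ip (coneg α) (γ t₀) (deriv γ t₀)
      ((Real.sqrt (eip (γ t₀) (γ t₀)))⁻¹ • γ t₀))
    (hhigh : RG.ip (coneg α) (γ t₀) (deriv γ t₀)
      ((Real.sqrt (eip (γ t₀) (γ t₀)))⁻¹ • γ t₀) < 1) :
    ∃ d₀ > 0, ∀ t ∈ Ioo (0:ℝ) 1, d₀ ≤ RG.pdist (coneg α) univ (γ t) 0 := by
  obtain ⟨hα0, hα2⟩ := hα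
  have hsin : 0 < Real.sin α :=
    Real.sin_pos_of_pos_of_lt_pi hα0 (lt_of_le_of_lt hα2 (by linarith [Real.pi_pos]))
  have hsinne : Real.sin α ≠ 0 := hsin.ne'
  set J : ℝ → ℝ := fun u => γ u 0 * deriv γ u 1 - γ u 1 * deriv γ u 0 with hJdef
  have hJconst : ∀ t ∈ Ioo (0:ℝ) 1, J t = J t₀ := by
    intro t ht
    have hdiff : DifferentiableOn ℝ J (Ioo 0 1) := fun u hu =>
      (cross_hasDerivAt α hsinne hgeo hu).differentiableAt.differentiableWithinAt
    have hfd : ∀ u ∈ Ioo (0:ℝ) 1, fderivWithin ℝ J (Ioo 0 1) u = 0 := by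
      intro u hu
      have h : HasFDerivWithinAt J
          (ContinuousLinearMap.smulRight (1 : ℝ →L[ℝ] ℝ) (0:ℝ)) (Ioo 0 1) u :=
        (cross_hasDerivAt α hsinne hgeo hu).hasFDerivAt.hasFDerivWithinAt
      rw [h.fderivWithin (isOpen_Ioo.uniqueDiffOn u hu)]
      ext1
      simp
    exact (convex_Ioo (0:ℝ) 1).is_const_of_fderivWithin_eq_zero hdiff hfd ht ht₀
  have hx₀ : γ t₀ ≠ 0 := hgeo.1 t₀ ht₀
  have hq₀ : 0 < eip (γ t₀) (γ t₀) := eip_pos hx₀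
  rw [ip_coneg_radial α hx₀] at hlow hhigh
  have hsq : 0 < Real.sqrt (eip (γ t₀) (γ t₀)) := Real.sqrt_pos.2 hq₀
  have habs : (eip (γ t₀) (deriv γ t₀)) ^ 2 < eip (γ t₀) (γ t₀) := by
    have h1 : eip (γ t₀) (deriv γ t₀) < Real.sqrt (eip (γ t₀) (γ t₀)) := by
      rwa [div_lt_one hsq] at hhigh
    have h2 : -Real.sqrt (eip (γ t₀) (γ t₀)) < eip (γ t₀) (deriv γ t₀) := by
      have := (lt_div_iff₀ hsq).1 hlow
      linarith
    nlinarith [Real.sq_sqrt hq₀.le]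
  have hunit₀ := hunit t₀ ht₀
  rw [ip_coneg_lagrange α hx₀, ← add_div, div_eq_one_iff_eq hq₀.ne'] at hunit₀
  have hJ0 : Real.sin α ^ 2 * (J t₀) ^ 2 =
      eip (γ t₀) (γ t₀) - (eip (γ t₀) (deriv γ t₀)) ^ 2 := by
    have hJt₀ : J t₀ = γ t₀ 0 * deriv γ t₀ 1 - γ t₀ 1 * deriv γ t₀ 0 := rfl
    rw [hJt₀]
    linarith [hunit₀]
  set m := Real.sin α ^ 2 * (J t₀) ^ 2 with hm
  have hmpos : 0 < m := by rw [hJ0]; linarith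
  have hqt : ∀ t ∈ Ioo (0:ℝ) 1, m ≤ eip (γ t) (γ t) := by
    intro t ht
    have hx : γ t ≠ 0 := hgeo.1 t ht
    have hq : 0 < eip (γ t) (γ t) := eip_pos hx
    have hu := hunit t ht
    rw [ip_coneg_lagrange α hx, ← add_div, div_eq_one_iff_eq hq.ne'] at hu
    have hJt : γ t 0 * deriv γ t 1 - γ t 1 * deriv γ t 0 = J t₀ := hJconst t ht
    rw [hJt] at hu
    rw [hm]
    nlinarith [sq_nonneg (eip (γ t) (deriv γ t))]
  refine ⟨Real.sin α * Real.sqrt (m / 2), by positivity, ?_⟩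
  intro t ht
  rw [RG.pdist]
  apply le_csInf
  · exact ⟨RG.length (coneg α) (fun u => (1 - u) • γ t) 0 1, ⟨fun u => (1 - u) • γ t,
      ⟨by simp, by simp, fun u _ => mem_univ _,
        ((contDiff_const.sub contDiff_id).smul contDiff_const).contDiffOn⟩, rfl⟩⟩
  · rintro L ⟨σ, ⟨hσ0, hσ1, -, hσC⟩, rfl⟩
    have hlen := length_ge α hsin hσ0 hσ1 hσC
    have h2 : Real.sqrt (m / 2) ≤ ‖γ t‖ := by
      have hq := hqt t ht
      have h3 := eip_le_two_norm_sq (γ t)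
      calc Real.sqrt (m / 2) ≤ Real.sqrt (‖γ t‖ ^ 2) := Real.sqrt_le_sqrt (by linarith)
      _ = ‖γ t‖ := Real.sqrt_sq (norm_nonneg _)
    calc Real.sin α * Real.sqrt (m / 2) ≤ Real.sin α * ‖γ t‖ :=
          mul_le_mul_of_nonneg_left h2 hsin.le
    _ ≤ RG.length (coneg α) σ 0 1 := hlen
end
end

section
/- Let (S,g) be a complete surface of non-negative Gauss curvature and let γ: ℝ → S be a complete geodesic parametrized by arc length that is stable, i.e. ∫_{-∞}^{+∞} |u'(t)|² dt ≥ ∫_{-∞}^{+∞} K(γ(t)) u(t)² dt for all compactly supported Lipschitz functions u: ℝ → ℝ. Then the Gauss curvature K vanishes identically along γ. -/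
/- ------------------------------------------------------------------------ -/
/- Common framework: Riemannian metrics in a global coordinate chart on ℝ². -/
/- Surfaces are modeled in (global) coordinates: points are elements of     -/
/- `Pt := Fin 2 → ℝ` and a Riemannian metric is a (smooth, symmetric,       -/
/- positive definite) matrix field `g : Pt → Fin 2 → Fin 2 → ℝ`.            -/
/- ------------------------------------------------------------------------ -/

noncomputable section

open Real Set Filter MeasureTheory Topology

section Stmt18Aux

open RG

variable {g : Pt → Fin 2 → Fin 2 → ℝ}

lemma stmt18_ip_expand (x v w : Pt) :
    RG.ip g x v w = g x 0 0 * v 0 * w 0 + g x 0 1 * v 0 * w 1 +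
      g x 1 0 * v 1 * w 0 + g x 1 1 * v 1 * w 1 := by
  simp [RG.ip, Fin.sum_univ_two]; ring

lemma stmt18_det_pos (hmet : RG.IsMetricOn g univ) (x : Pt) :
    0 < g x 0 0 * g x 1 1 - g x 0 1 * g x 1 0 := by
  have hsym := hmet.1 x 0 1
  have hpos := hmet.2.1 x (mem_univ x)
  have h11 : 0 < g x 1 1 := by
    have hv : (![0, 1] : Pt) ≠ 0 := by
      intro h; have := congr_fun h 1; simp at this
    have := hpos ![0,1] hv
    rw [stmt18_ip_expand] at this
    simpa using this
  have hv2 : (![g x 1 1, -(g x 0 1)] : Pt) ≠ 0 := by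
    intro h; have := congr_fun h 0; simp at this; exact h11.ne' this
  have hip2 := hpos ![g x 1 1, -(g x 0 1)] hv2
  rw [stmt18_ip_expand] at hip2
  simp only [Matrix.cons_val_zero, Matrix.cons_val_one, Matrix.head_cons] at hip2
  nlinarith [hip2, h11, hsym]

lemma stmt18_contDiff_g (hmet : RG.IsMetricOn g univ) : ContDiff ℝ (⊤ : ℕ∞) g := by
  rw [← contDiffOn_univ]; exact hmet.2.2

lemma stmt18_contDiff_g_entry (hmet : RG.IsMetricOn g univ) (i j : Fin 2) :
    ContDiff ℝ (⊤ : ℕ∞) fun x => g x i j :=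
  contDiff_pi.mp (contDiff_pi.mp (stmt18_contDiff_g hmet) i) j

lemma stmt18_contDiff_dg (hmet : RG.IsMetricOn g univ) (l i j : Fin 2) :
    ContDiff ℝ (⊤ : ℕ∞) fun x => RG.dg g l x i j := by
  have h1 : ContDiff ℝ (⊤ : ℕ∞) (fderiv ℝ g) :=
    (stmt18_contDiff_g hmet).fderiv_right (by simp)
  have h2 : ContDiff ℝ (⊤ : ℕ∞) fun x => fderiv ℝ g x (Pi.single l 1) :=
    h1.clm_apply contDiff_const
  exact contDiff_pi.mp (contDiff_pi.mp h2 i) j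

lemma stmt18_ginv_eq (x : Pt) (k l : Fin 2) :
    RG.ginv g x k l = (g x 0 0 * g x 1 1 - g x 0 1 * g x 1 0)⁻¹ *
      (!![g x 1 1, -(g x 0 1); -(g x 1 0), g x 0 0] k l) := by
  rw [RG.ginv, Matrix.inv_def, Matrix.adjugate_fin_two, Matrix.det_fin_two]
  simp [Ring.inverse_eq_inv', Matrix.smul_apply, smul_eq_mul]

lemma stmt18_contDiff_ginv (hmet : RG.IsMetricOn g univ) (k l : Fin 2) :
    ContDiff ℝ (⊤ : ℕ∞) fun x => RG.ginv g x k l := by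
  have hdet : ContDiff ℝ (⊤ : ℕ∞) fun x => g x 0 0 * g x 1 1 - g x 0 1 * g x 1 0 :=
    ((stmt18_contDiff_g_entry hmet 0 0).mul (stmt18_contDiff_g_entry hmet 1 1)).sub
      ((stmt18_contDiff_g_entry hmet 0 1).mul (stmt18_contDiff_g_entry hmet 1 0))
  have hinv : ContDiff ℝ (⊤ : ℕ∞) fun x => (g x 0 0 * g x 1 1 - g x 0 1 * g x 1 0)⁻¹ :=
    hdet.inv fun x => (stmt18_det_pos hmet x).ne'
  have hadj : ContDiff ℝ (⊤ : ℕ∞) fun x => !![g x 1 1, -(g x 0 1); -(g x 1 0), g x 0 0] k l := by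
    fin_cases k <;> fin_cases l <;> simp <;>
      first
        | exact stmt18_contDiff_g_entry hmet 1 1
        | exact (stmt18_contDiff_g_entry hmet 0 1).neg
        | exact (stmt18_contDiff_g_entry hmet 1 0).neg
        | exact stmt18_contDiff_g_entry hmet 0 0
  have heq : (fun x => RG.ginv g x k l) = fun x =>
      (g x 0 0 * g x 1 1 - g x 0 1 * g x 1 0)⁻¹ *
        (!![g x 1 1, -(g x 0 1); -(g x 1 0), g x 0 0] k l) :=
    funext fun x => stmt18_ginv_eq x k l
  rw [heq]; exact hinv.mul hadj

lemma stmt18_contDiff_christoffel (hmet : RG.IsMetricOn g univ) (k i j : Fin 2) :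
    ContDiff ℝ (⊤ : ℕ∞) fun x => RG.christoffel g x k i j := by
  unfold RG.christoffel
  refine contDiff_const.mul (ContDiff.sum fun l _ => ?_)
  exact (stmt18_contDiff_ginv hmet k l).mul
    (((stmt18_contDiff_dg hmet i j l).add (stmt18_contDiff_dg hmet j i l)).sub
      (stmt18_contDiff_dg hmet l i j))

lemma stmt18_cont_dchristoffel (hmet : RG.IsMetricOn g univ) (l k i j : Fin 2) :
    Continuous fun x => RG.dchristoffel g l x k i j := by
  unfold RG.dchristoffel
  have h1 : ContDiff ℝ (⊤ : ℕ∞) (fderiv ℝ fun y => RG.christoffel g y k i j) :=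
    (stmt18_contDiff_christoffel hmet k i j).fderiv_right (by simp)
  exact (h1.clm_apply contDiff_const).continuous

lemma stmt18_cont_riem (hmet : RG.IsMetricOn g univ) (l i j k : Fin 2) :
    Continuous fun x => RG.riem g x l i j k := by
  unfold RG.riem
  refine ((stmt18_cont_dchristoffel hmet i l j k).sub
    (stmt18_cont_dchristoffel hmet j l i k)).add (continuous_finset_sum _ fun m _ => ?_)
  exact (((stmt18_contDiff_christoffel hmet l i m).continuous.mul
      (stmt18_contDiff_christoffel hmet m j k).continuous).sub
    ((stmt18_contDiff_christoffel hmet l j m).continuous.mul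
      (stmt18_contDiff_christoffel hmet m i k).continuous))

lemma stmt18_cont_gauss (hmet : RG.IsMetricOn g univ) :
    Continuous fun x => RG.gauss g x := by
  unfold RG.gauss
  refine Continuous.div (continuous_finset_sum _ fun l _ => ?_) ?_
    (fun x => (stmt18_det_pos hmet x).ne')
  · exact (stmt18_contDiff_g_entry hmet l 0).continuous.mul (stmt18_cont_riem hmet l 0 1 1)
  · exact (((stmt18_contDiff_g_entry hmet 0 0).mul
      (stmt18_contDiff_g_entry hmet 1 1)).sub
      ((stmt18_contDiff_g_entry hmet 0 1).mul (stmt18_contDiff_g_entry hmet 1 0))).continuous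

end Stmt18Aux

/-- A fixed bump function on `ℝ`: equal to `1` on `[-1,1]`, supported in `(-2,2)`. -/
def stmt18Bump : ContDiffBump (0 : ℝ) := ⟨1, 2, one_pos, one_lt_two⟩

lemma stmt18Bump_rIn : stmt18Bump.rIn = 1 := rfl

lemma stmt18Bump_rOut : stmt18Bump.rOut = 2 := rfl

/-- stability rigidity. On a complete surface of non-negative Gauss
curvature, if a complete unit-speed geodesic `γ : ℝ → S` is stable — i.e.
`∫ u'² ≥ ∫ K(γ(t)) u²` for all compactly supported Lipschitz functions `u` — then the
Gauss curvature vanishes identically along `γ`. -/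
theorem stmt_18 (g : Pt → Fin 2 → Fin 2 → ℝ) (hmet : RG.IsMetricOn g univ)
    (hcomp : RG.CompleteWith (RG.pdist g univ))
    (hK : ∀ x : Pt, 0 ≤ RG.gauss g x)
    (γ : ℝ → Pt) (hgeo : RG.IsGeodesicOn g univ γ univ)
    (hunit : RG.UnitSpeedOn g γ univ)
    (hstable : ∀ u : ℝ → ℝ, (∃ c : NNReal, LipschitzWith c u) → HasCompactSupport u →
      ∫ t : ℝ, RG.gauss g (γ t) * (u t) ^ 2 ≤ ∫ t : ℝ, (deriv u t) ^ 2) :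
    ∀ t : ℝ, RG.gauss g (γ t) = 0 := by
  classical
  have hcont : Continuous fun t => RG.gauss g (γ t) :=
    (stmt18_cont_gauss hmet).comp (continuousOn_univ.mp hgeo.2.1.continuousOn)
  intro t₀
  by_contra hne
  set f : ℝ → ℝ := fun t => RG.gauss g (γ t) with hfdef
  have hε : 0 < f t₀ := lt_of_le_of_ne (hK (γ t₀)) (Ne.symm hne)
  set ε : ℝ := f t₀ with hεdef
  obtain ⟨δ', hδ'pos, hδ'⟩ := Metric.continuousAt_iff.mp (hcont.continuousAt (x := t₀)) (ε / 2) (by positivity)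
  set δ : ℝ := δ' / 2 with hδdef
  have hδpos : 0 < δ := by positivity
  have hlow : ∀ t ∈ Icc (t₀ - δ) (t₀ + δ), ε / 2 ≤ f t := by
    intro t ht
    obtain ⟨ht1, ht2⟩ := mem_Icc.mp ht
    have hdist : dist t t₀ < δ' := by
      rw [Real.dist_eq]
      have habs : |t - t₀| ≤ δ := abs_le.mpr ⟨by linarith, by linarith⟩
      linarith
    have := hδ' hdist
    rw [Real.dist_eq, abs_lt] at this
    linarith [this.1]
  set χ : ContDiffBump (0 : ℝ) := stmt18Bump with hχdef
  have hχsm : ContDiff ℝ ((2 : ℕ∞) : WithTop ℕ∞) (χ : ℝ → ℝ) := χ.contDiff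
  have h12 : (1 : WithTop ℕ∞) ≤ ((2 : ℕ∞) : WithTop ℕ∞) := by exact_mod_cast one_le_two
  have hχd : Continuous (deriv (χ : ℝ → ℝ)) := hχsm.continuous_deriv h12
  set F : ℝ → ℝ := fun s => deriv (χ : ℝ → ℝ) s ^ 2 with hFdef
  have hFc : Continuous F := hχd.pow 2
  set C : ℝ := ∫ s : ℝ, F s with hCdef
  have hC : 0 ≤ C := integral_nonneg fun s => sq_nonneg _
  set D : ℝ := δ * (ε / 2) with hDdef
  have hD : 0 < D := by positivity
  set n : ℝ := max (|t₀| + δ) (C / D + 1) with hndef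
  have hnpos : 0 < n := lt_of_lt_of_le (by positivity) (le_max_left _ _)
  set u : ℝ → ℝ := fun t => χ (n⁻¹ * t) with hudef
  have hucd : ContDiff ℝ ((2 : ℕ∞) : WithTop ℕ∞) u := hχsm.comp (contDiff_const.mul contDiff_id)
  have hucs : HasCompactSupport u := by
    apply HasCompactSupport.intro (isCompact_closedBall (0 : ℝ) (2 * n))
    intro x hx
    apply χ.zero_of_le_dist
    rw [Real.dist_eq, sub_zero, abs_mul, abs_inv, abs_of_pos hnpos, hχdef, stmt18Bump_rOut]
    rw [Metric.mem_closedBall, Real.dist_eq, sub_zero, not_le] at hx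
    rw [le_inv_mul_iff₀ hnpos]
    linarith
  have hud : ∀ t : ℝ, HasDerivAt u (n⁻¹ * deriv (χ : ℝ → ℝ) (n⁻¹ * t)) t := by
    intro t
    have h1 : HasDerivAt (fun t : ℝ => n⁻¹ * t) n⁻¹ t := by
      simpa using (hasDerivAt_id t).const_mul n⁻¹
    have h2 : HasDerivAt (χ : ℝ → ℝ) (deriv (χ : ℝ → ℝ) (n⁻¹ * t)) (n⁻¹ * t) :=
      (hχsm.differentiable (by simp) (n⁻¹ * t)).hasDerivAt
    rw [show n⁻¹ * deriv (χ : ℝ → ℝ) (n⁻¹ * t) = deriv (χ : ℝ → ℝ) (n⁻¹ * t) * n⁻¹ from mul_comm _ _]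
    exact h2.comp t h1
  have hderiv_u : deriv u = fun t => n⁻¹ * deriv (χ : ℝ → ℝ) (n⁻¹ * t) :=
    funext fun t => (hud t).deriv
  have hRHS : ∫ t : ℝ, deriv u t ^ 2 = n⁻¹ * C := by
    rw [hderiv_u]
    have hptw : ∀ t : ℝ, (n⁻¹ * deriv (χ : ℝ → ℝ) (n⁻¹ * t)) ^ 2 = n⁻¹ ^ 2 * F (n⁻¹ • t) := by
      intro t; simp only [hFdef, smul_eq_mul]; ring
    simp only [hptw]
    rw [MeasureTheory.integral_const_mul, MeasureTheory.Measure.integral_comp_inv_smul volume F n]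
    rw [Module.finrank_self, pow_one, abs_of_pos hnpos, smul_eq_mul, ← hCdef]
    field_simp
  have hlip : ∃ c : NNReal, LipschitzWith c u :=
    hucd.lipschitzWith_of_hasCompactSupport hucs (by simp)
  have hmain : ∫ t : ℝ, f t * u t ^ 2 ≤ n⁻¹ * C := by
    rw [← hRHS]; exact hstable u hlip hucs
  have hfu_cont : Continuous fun t => f t * u t ^ 2 := hcont.mul (hucd.continuous.pow 2)
  have hu2cs : HasCompactSupport fun t => u t ^ 2 :=
    hucs.comp_left (g := fun y : ℝ => y ^ 2) (by simp)
  have hfu_cs : HasCompactSupport fun t => f t * u t ^ 2 := hu2cs.mul_left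
  have hfu_int : Integrable fun t => f t * u t ^ 2 :=
    hfu_cont.integrable_of_hasCompactSupport hfu_cs
  have hfu_nonneg : ∀ t, 0 ≤ f t * u t ^ 2 := fun t => mul_nonneg (hK (γ t)) (sq_nonneg _)
  have hsub : ∫ t in Icc (t₀ - δ) (t₀ + δ), f t * u t ^ 2 ≤ ∫ t : ℝ, f t * u t ^ 2 :=
    setIntegral_le_integral hfu_int (Eventually.of_forall hfu_nonneg)
  have hone : ∀ t ∈ Icc (t₀ - δ) (t₀ + δ), u t = 1 := by
    intro t ht
    obtain ⟨ht1, ht2⟩ := mem_Icc.mp ht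
    apply χ.one_of_mem_closedBall
    rw [Metric.mem_closedBall, Real.dist_eq, sub_zero, abs_mul, abs_inv, abs_of_pos hnpos,
      hχdef, stmt18Bump_rIn, inv_mul_le_iff₀ hnpos, mul_one]
    have h1 : |t| ≤ |t₀| + δ := by
      have habs : |t - t₀| ≤ δ := abs_le.mpr ⟨by linarith, by linarith⟩
      calc |t| = |t₀ + (t - t₀)| := by congr 1; ring
        _ ≤ |t₀| + |t - t₀| := abs_add_le _ _
        _ ≤ |t₀| + δ := by linarith
    exact le_trans h1 (le_max_left _ _)
  have hIcc_ne : volume (Icc (t₀ - δ) (t₀ + δ)) ≠ ⊤ := by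
    rw [Real.volume_Icc]; exact ENNReal.ofReal_ne_top
  have hLB : ε / 2 * (volume (Icc (t₀ - δ) (t₀ + δ))).toReal ≤
      ∫ t in Icc (t₀ - δ) (t₀ + δ), f t * u t ^ 2 := by
    apply setIntegral_ge_of_const_le_real measurableSet_Icc hIcc_ne
    · intro t ht
      rw [hone t ht]
      simpa using hlow t ht
    · exact hfu_int.integrableOn
  have hvol : (volume (Icc (t₀ - δ) (t₀ + δ))).toReal = 2 * δ := by
    rw [Real.volume_Icc, ENNReal.toReal_ofReal (by linarith)]
    ring
  rw [hvol] at hLB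
  have hCn : n⁻¹ * C < D := by
    have h1 : C / D < n :=
      lt_of_lt_of_le (lt_add_of_pos_right _ one_pos) (le_max_right _ _)
    have h2 : C < n * D := by
      rw [div_lt_iff₀ hD] at h1; linarith [h1]
    rw [inv_mul_eq_div, div_lt_iff₀ hnpos]
    linarith [h2]
  have : ε / 2 * (2 * δ) ≤ n⁻¹ * C := le_trans hLB (le_trans hsub hmain)
  rw [hDdef] at hCn
  nlinarith [hδpos, hε]
end
end
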